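/- arXiv:1303.0187 — 6 statements merged into one kernel-verified Lean document; each statement's English description precedes it below -/
import Mathlib

section
/- Let n ≥ 2 and let i = √−1 ∈ ℂ. Define the four maps ρ₁, ρ₂, ρ₃, ρ₄ : Mₙ(ℂ) → Mₙ(ℂ) by ρ₁(x) = x, ρ₂(x) = −x, ρ₃(x) = i·xᵀ, ρ₄(x) = −i·xᵀ. Then these four representations are pairwise inequivalent: for every pair k ≠ l from {1,2,3,4} there is no invertible matrix T ∈ Mₙ(ℂ) with ρ_k(x) = T⁻¹ * ρ_l(x) * T for all x ∈ Mₙ(ℂ). -/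
/-! Each `ρ_k` sends the identity to a scalar matrix `c_k • 1` with `c_k ∈ {1, -1, i, -i}`.
Conjugation fixes scalar matrices, so an equivalence between `ρ_k` and `ρ_l` forces
`c_k = c_l`, i.e. `k = l`. -/

open Matrix

/-- The four representations `ρ₁(x) = x`, `ρ₂(x) = -x`, `ρ₃(x) = i·xᵀ`, `ρ₄(x) = -i·xᵀ`
of the anti-Jordan triple system of `n × n` complex matrices. -/
noncomputable def rho (n : ℕ) :
    Fin 4 → Matrix (Fin n) (Fin n) ℂ → Matrix (Fin n) (Fin n) ℂ :=
  ![fun x => x, fun x => -x, fun x => Complex.I • xᵀ, fun x => (-Complex.I) • xᵀ]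

noncomputable def rhoScalar : Fin 4 → ℂ := ![1, -1, Complex.I, -Complex.I]

lemma rho_one (n : ℕ) (k : Fin 4) : rho n k 1 = rhoScalar k • 1 := by
  fin_cases k <;> simp [rho, rhoScalar]

lemma rhoScalar_injective : Function.Injective rhoScalar := by
  intro k l h
  fin_cases k <;> fin_cases l <;> simp_all [rhoScalar, Complex.ext_iff] <;> norm_num at h

lemma Matrix.inv_mul_smul_one_mul {m R : Type*} [Fintype m] [DecidableEq m] [CommRing R]
    {T : Matrix m m R} (hT : IsUnit T) (c : R) : T⁻¹ * (c • 1) * T = c • 1 := by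
  rw [Matrix.mul_smul, mul_one, Matrix.smul_mul,
    nonsing_inv_mul T ((isUnit_iff_isUnit_det T).mp hT)]

/-- For `n ≥ 2`, the four representations `ρ₁, ρ₂, ρ₃, ρ₄` are pairwise inequivalent:
for `k ≠ l` there is no invertible matrix `T` with `ρ_k(x) = T⁻¹ * ρ_l(x) * T` for all `x`. -/
theorem rho_pairwise_inequivalent (n : ℕ) (hn : 2 ≤ n) (k l : Fin 4) (hkl : k ≠ l) :
    ¬ ∃ T : Matrix (Fin n) (Fin n) ℂ, IsUnit T ∧
      ∀ x : Matrix (Fin n) (Fin n) ℂ, rho n k x = T⁻¹ * rho n l x * T := by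
  have : Nonempty (Fin n) := ⟨⟨0, by omega⟩⟩
  rintro ⟨T, hT, h⟩
  have h_one := h 1
  rw [rho_one, rho_one, inv_mul_smul_one_mul hT] at h_one
  exact hkl (rhoScalar_injective (smul_left_injective ℂ one_ne_zero h_one))
end

section
/- If the universal associative envelope 𝔄 is finite-dimensional as an F-vector space, then dim_F 𝔄 ≥ 4n² + 1. -/
noncomputable section

/-- The defining relations of the universal associative envelope of the anti-Jordan
triple system of `n × n` matrices: `x_{ij}x_{kl}x_{mt} - x_{mt}x_{kl}x_{ij}
- δ_{jk}δ_{lm} x_{it} + δ_{tk}δ_{li} x_{mj} ~ 0`.  (Index `1` of the paper is `0 : Fin n`.) -/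
def ajtsRel (F : Type*) [Field F] (n : ℕ) :
    FreeAlgebra F (Fin n × Fin n) → FreeAlgebra F (Fin n × Fin n) → Prop :=
  fun a b => b = 0 ∧ ∃ i j k l m t : Fin n,
    a = FreeAlgebra.ι F (i, j) * FreeAlgebra.ι F (k, l) * FreeAlgebra.ι F (m, t)
        - FreeAlgebra.ι F (m, t) * FreeAlgebra.ι F (k, l) * FreeAlgebra.ι F (i, j)
        - (if j = k ∧ l = m then FreeAlgebra.ι F (i, t) else 0)
        + (if t = k ∧ l = i then FreeAlgebra.ι F (m, j) else 0)

/-- The universal associative envelope `𝔄 = F⟨X⟩/I` of the anti-Jordan triple system of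
`n × n` matrices with product `⟨a,b,c⟩ = abc - cba`. -/
abbrev Env (F : Type*) [Field F] (n : ℕ) := RingQuot (ajtsRel F n)

/-- The image `e_{ij}` of the generator `x_{ij}` in the universal envelope `𝔄`. -/
def gen (F : Type*) [Field F] (n : ℕ) (i j : Fin n) : Env F n :=
  RingQuot.mkAlgHom F (ajtsRel F n) (FreeAlgebra.ι F (i, j))

/-!
The envelope has five representations coming from triple homomorphisms out of the matrices:
`a ↦ 0` into `F`, and `a ↦ a`, `a ↦ -a`, `a ↦ z aᵀ`, `a ↦ -z aᵀ` (with `z² = -1`) into `Mₙ(F)`.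
Each of them is onto, and together they map `𝔄` onto `F × Mₙ(F)⁴`: the image `∑ e_ii` of the
identity matrix acts in the five factors by the distinct scalars `0, 1, -1, z, -z`, so suitable
polynomials in it are `1` on one factor and `0` on the others. Hence `dim 𝔄 ≥ 1 + 4n²`.
-/

open Polynomial Matrix

namespace AntiJordan

variable {F S A : Type*} [Field F] [Ring S] [Ring A] [Algebra F S] [Algebra F A]

def triple (a b c : S) : S := a * b * c - c * b * a

def IsTripleHom (f : S →ₗ[F] A) : Prop :=
  ∀ a b c, f (triple a b c) = triple (f a) (f b) (f c)

theorem isTripleHom_zero : IsTripleHom (0 : S →ₗ[F] A) := by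
  simp [IsTripleHom, triple]

theorem isTripleHom_smul_id {c : F} (hc : c ^ 3 = c) :
    IsTripleHom (c • LinearMap.id : S →ₗ[F] S) := by
  intro a b d
  simp only [triple, LinearMap.smul_apply, LinearMap.id_apply, mul_assoc, smul_sub,
    smul_mul_smul]
  rw [← pow_three, hc]

theorem isTripleHom_smul_transpose {m : Type*} [Fintype m] [DecidableEq m] {c : F}
    (hc : c ^ 3 = -c) : IsTripleHom (c • (transposeLinearEquiv m m F F).toLinearMap) := by
  intro a b d
  change c • (a * b * d - d * b * a)ᵀ = triple (c • aᵀ) (c • bᵀ) (c • dᵀ)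
  simp only [triple, transpose_sub, transpose_mul, mul_assoc, smul_mul_smul, smul_sub]
  rw [← pow_three, hc, neg_smul, neg_smul]
  abel

end AntiJordan

theorem Matrix.single_one_mul_single_one_mul_single_one {m R : Type*} [Fintype m]
    [DecidableEq m] [Semiring R] (i j k l p q : m) :
    single i j (1 : R) * single k l 1 * single p q 1 =
      if j = k ∧ l = p then single i q 1 else 0 := by
  by_cases hjk : j = k
  · subst hjk
    by_cases hlp : l = p
    · subst hlp
      simp
    · simp [hlp]
  · simp [hjk]

theorem LinearMap.surjective_smul {R M N : Type*} [Field R] [AddCommGroup M] [AddCommGroup N]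
    [Module R M] [Module R N] {f : M →ₗ[R] N} (hf : Function.Surjective f) {c : R}
    (hc : c ≠ 0) : Function.Surjective (c • f) := fun y =>
  let ⟨x, hx⟩ := hf (c⁻¹ • y)
  ⟨x, by rw [LinearMap.smul_apply, hx, smul_smul, mul_inv_cancel₀ hc, one_smul]⟩

theorem AlgHom.prod_surjective_of_aeval_eq_zero {F E A B : Type*} [Field F] [Ring E] [Ring A]
    [Ring B] [Algebra F E] [Algebra F A] [Algebra F B] {φ : E →ₐ[F] A} {ψ : E →ₐ[F] B}
    (hφ : Function.Surjective φ) (hψ : Function.Surjective ψ) {x : E} {c : F}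
    (hx : φ x = algebraMap F A c) {q : F[X]} (hqc : q.eval c ≠ 0) (hqψ : aeval (ψ x) q = 0) :
    Function.Surjective (φ.prod ψ) := by
  obtain ⟨e, he₁, he₀⟩ : ∃ e, φ e = 1 ∧ ψ e = 0 := by
    refine ⟨aeval x (C (q.eval c)⁻¹ * q), ?_, ?_⟩
    · rw [← aeval_algHom_apply, hx, aeval_algebraMap_apply_eq_algebraMap_eval, eval_mul, eval_C,
        inv_mul_cancel₀ hqc, map_one]
    · rw [← aeval_algHom_apply, aeval_mul, hqψ, mul_zero]
  rintro ⟨a, b⟩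
  obtain ⟨y, rfl⟩ := hφ a
  obtain ⟨w, rfl⟩ := hψ b
  refine ⟨e * y + (1 - e) * w, Prod.ext ?_ ?_⟩ <;> simp [he₁, he₀]

namespace Env

open AntiJordan

variable {F A B : Type*} [Field F] [Ring A] [Ring B] [Algebra F A] [Algebra F B] {n : ℕ}

local notation "𝕄" => Matrix (Fin n) (Fin n) F

def lift (f : 𝕄 →ₗ[F] A) (hf : IsTripleHom f) : Env F n →ₐ[F] A :=
  RingQuot.liftAlgHom F ⟨FreeAlgebra.lift F fun p => f (single p.1 p.2 1), by
    rintro _ _ ⟨rfl, i, j, k, l, m, t, rfl⟩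
    have hrel := hf (single i j 1) (single k l 1) (single m t 1)
    simp only [triple, single_one_mul_single_one_mul_single_one, map_sub, apply_ite f,
      map_zero] at hrel
    simp only [map_add, map_sub, map_mul, apply_ite (FreeAlgebra.lift F _), map_zero,
      FreeAlgebra.lift_ι_apply]
    rw [← hrel]
    abel⟩

theorem lift_gen {f : 𝕄 →ₗ[F] A} (hf : IsTripleHom f) (i j : Fin n) :
    lift f hf (gen F n i j) = f (single i j 1) := by
  simp [lift, gen]

def ι : 𝕄 →ₗ[F] Env F n :=
  (stdBasis F (Fin n) (Fin n)).constr F fun p => gen F n p.1 p.2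

@[simp]
theorem lift_ι {f : 𝕄 →ₗ[F] A} (hf : IsTripleHom f) (a : 𝕄) : lift f hf (ι a) = f a := by
  have : (lift f hf).toLinearMap ∘ₗ ι = f := (stdBasis F (Fin n) (Fin n)).ext fun ⟨i, j⟩ => by
    rw [LinearMap.comp_apply, AlgHom.toLinearMap_apply, ι, Module.Basis.constr_basis, lift_gen,
      stdBasis_eq_single]
  exact LinearMap.congr_fun this a

theorem lift_surjective {f : 𝕄 →ₗ[F] A} (hf : IsTripleHom f) (hfs : Function.Surjective f) :
    Function.Surjective (lift f hf) := fun y =>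
  let ⟨a, ha⟩ := hfs y
  ⟨ι a, (lift_ι hf a).trans ha⟩

theorem lift_smul_prod_surjective {σ : 𝕄 →ₗ[F] A} (hσ : Function.Surjective σ)
    (hσ₁ : σ 1 = 1) {c : F} (hc : c ≠ 0) (hf : IsTripleHom (c • σ)) {ψ : Env F n →ₐ[F] B}
    (hψ : Function.Surjective ψ) {q : F[X]} (hqc : q.eval c ≠ 0)
    (hqψ : aeval (ψ (ι 1)) q = 0) : Function.Surjective ((lift (c • σ) hf).prod ψ) :=
  AlgHom.prod_surjective_of_aeval_eq_zero
    (lift_surjective hf (LinearMap.surjective_smul hσ hc)) hψ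
    (by rw [lift_ι, LinearMap.smul_apply, hσ₁, Algebra.algebraMap_eq_smul_one]) hqc hqψ

theorem exists_algHom_surjective {z : F} (hz : z ^ 2 = -1) (h2 : (2 : F) ≠ 0) :
    ∃ φ : Env F n →ₐ[F] F × 𝕄 × 𝕄 × 𝕄 × 𝕄, Function.Surjective φ := by
  have hz0 : z ≠ 0 := by rintro rfl; norm_num at hz
  have hz3 : z ^ 3 = -z := by rw [pow_succ, hz, neg_one_mul]
  have hmz3 : (-z) ^ 3 = -(-z) := by rw [Odd.neg_pow (by decide), hz3]
  have hz4 : z ^ 4 = 1 := by rw [show 4 = 2 * 2 by rfl, pow_mul, hz]; norm_num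
  have hid : Function.Surjective (LinearMap.id : 𝕄 →ₗ[F] 𝕄) := Function.surjective_id
  have hτ := (transposeLinearEquiv (Fin n) (Fin n) F F).surjective
  have hτ₁ : (transposeLinearEquiv (Fin n) (Fin n) F F).toLinearMap 1 = 1 := transpose_one
  have s₄ := lift_surjective (isTripleHom_smul_transpose hmz3)
    (LinearMap.surjective_smul hτ (neg_ne_zero.2 hz0))
  have s₃₄ := lift_smul_prod_surjective hτ hτ₁ hz0 (isTripleHom_smul_transpose hz3) s₄
    (q := X + C z) (by simpa [← two_mul] using mul_ne_zero h2 hz0)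
    (by norm_num [Algebra.algebraMap_eq_smul_one])
  have s₂₃₄ := lift_smul_prod_surjective hid rfl (neg_ne_zero.2 one_ne_zero)
    (isTripleHom_smul_id (c := -1) (by norm_num)) s₃₄ (q := X ^ 2 + 1) (by norm_num [h2])
    (by norm_num [aeval_prod_apply, Algebra.algebraMap_eq_smul_one, _root_.smul_pow, hz])
  have s₁₂₃₄ := lift_smul_prod_surjective hid rfl one_ne_zero
    (isTripleHom_smul_id (one_pow 3)) s₂₃₄ (q := (X + 1) * (X ^ 2 + 1))
    (by simpa [one_add_one_eq_two] using mul_ne_zero h2 h2)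
    (by norm_num [aeval_prod_apply, Algebra.algebraMap_eq_smul_one, _root_.smul_pow, hz])
  refine ⟨_, AlgHom.prod_surjective_of_aeval_eq_zero (φ := lift 0 isTripleHom_zero)
    (fun c => ⟨algebraMap F _ c, AlgHom.commutes _ c⟩) s₁₂₃₄
    ((lift_ι _ 1).trans (map_zero _).symm) (q := X ^ 4 - 1) (by norm_num) ?_⟩
  norm_num [aeval_prod_apply, Algebra.algebraMap_eq_smul_one, _root_.smul_pow, hz4]

end Env

theorem envelope_dim_lower_bound_general (F : Type*) [Field F] [IsAlgClosed F] [CharZero F]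
    (n : ℕ) (h : FiniteDimensional F (Env F n)) :
    4 * n ^ 2 + 1 ≤ Module.finrank F (Env F n) := by
  obtain ⟨z, hz⟩ := IsAlgClosed.exists_pow_nat_eq (-1 : F) two_pos
  obtain ⟨φ, hφ⟩ := Env.exists_algHom_surjective (n := n) hz two_ne_zero
  have hdim := LinearMap.finrank_le_finrank_of_surjective (f := φ.toLinearMap) hφ
  simp only [Module.finrank_prod, Module.finrank_matrix, Module.finrank_self, Fintype.card_fin]
    at hdim
  linarith

/-- If the universal associative envelope `𝔄` is finite-dimensional over `F`,
then `dim_F 𝔄 ≥ 4n² + 1`. -/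
theorem envelope_dim_lower_bound (F : Type*) [Field F] [IsAlgClosed F] [CharZero F]
    (n : ℕ) (hn : 2 ≤ n) (h : FiniteDimensional F (Env F n)) :
    4 * n ^ 2 + 1 ≤ Module.finrank F (Env F n) :=
  envelope_dim_lower_bound_general F n h

end
end

section
/- Let F be a field of characteristic 0 and let A be the quotient of the free associative algebra F⟨a,b⟩ on two generators by the two-sided ideal generated by the two elements a²b − ba² and ab² − b²a. Then A is infinite-dimensional as an F-vector space. -/
noncomputable section

/-- The relations `a²b = ba²` and `ab² = b²a` on the free associative algebra `F⟨a,b⟩`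
(where `a = ι true` and `b = ι false`). -/
def duRel (F : Type*) [Field F] :
    FreeAlgebra F Bool → FreeAlgebra F Bool → Prop := fun x y =>
  y = 0 ∧
    (x = FreeAlgebra.ι F true ^ 2 * FreeAlgebra.ι F false
          - FreeAlgebra.ι F false * FreeAlgebra.ι F true ^ 2 ∨
     x = FreeAlgebra.ι F true * FreeAlgebra.ι F false ^ 2
          - FreeAlgebra.ι F false ^ 2 * FreeAlgebra.ι F true)

/-- Let `F` be a field of characteristic `0` and `A = F⟨a,b⟩ / (a²b - ba², ab² - b²a)`.
Then `A` is infinite-dimensional as an `F`-vector space. -/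
theorem downUp_infinite_dimensional (F : Type*) [Field F] [CharZero F] :
    ¬ FiniteDimensional F (RingQuot (duRel F)) := by
  intro hfd
  -- Map a ↦ X, b ↦ 0 into F[X]; the relations are satisfied.
  set f : FreeAlgebra F Bool →ₐ[F] Polynomial F :=
    FreeAlgebra.lift F (fun b => if b then Polynomial.X else 0) with hf
  have hrel : ∀ ⦃x y : FreeAlgebra F Bool⦄, duRel F x y → f x = f y := by
    rintro x y ⟨rfl, h | h⟩ <;> subst h <;>
      simp [hf, FreeAlgebra.lift_ι_apply]
  set g : RingQuot (duRel F) →ₐ[F] Polynomial F :=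
    RingQuot.liftAlgHom F ⟨f, hrel⟩ with hg
  have hX : g (RingQuot.mkAlgHom F (duRel F) (FreeAlgebra.ι F true)) = Polynomial.X := by
    rw [hg, RingQuot.liftAlgHom_mkAlgHom_apply]
    simp [hf, FreeAlgebra.lift_ι_apply]
  have hsurj : Function.Surjective g := by
    rw [← AlgHom.range_eq_top]
    rw [eq_top_iff, ← Polynomial.adjoin_X (R := F)]
    rw [Algebra.adjoin_le_iff]
    rintro p ⟨rfl⟩
    exact ⟨RingQuot.mkAlgHom F (duRel F) (FreeAlgebra.ι F true), hX⟩
  haveI : Module.Finite F (Polynomial F) :=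
    Module.Finite.of_surjective g.toLinearMap hsurj
  haveI := FiniteDimensional.fintypeBasisIndex (Polynomial.basisMonomials F)
  exact not_finite ℕ

end
end

section
/- In the universal associative envelope 𝔄 the following identities hold: (i) e_{rt}e_{tm} = e_{r1}e_{1m} for all r,t,m with m ≠ r and t ≠ 1; (ii) e_{it}e_{li} = e_{1t}e_{l1} for all i,t,l with t ≠ l and i ≠ 1; (iii) e_{ij}e_{kl} = 0 for all i,j,k,l with i ≠ l and j ≠ k. -/
noncomputable section

lemma eq3 (F : Type*) [Field F] (n : ℕ) (i j k l m t : Fin n) :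
    gen F n i j * gen F n k l * gen F n m t - gen F n m t * gen F n k l * gen F n i j
      = (if j = k ∧ l = m then gen F n i t else 0)
        - (if t = k ∧ l = i then gen F n m j else 0) := by
  have hrel : ajtsRel F n
      (FreeAlgebra.ι F (i, j) * FreeAlgebra.ι F (k, l) * FreeAlgebra.ι F (m, t)
        - FreeAlgebra.ι F (m, t) * FreeAlgebra.ι F (k, l) * FreeAlgebra.ι F (i, j)
        - (if j = k ∧ l = m then FreeAlgebra.ι F (i, t) else 0)
        + (if t = k ∧ l = i then FreeAlgebra.ι F (m, j) else 0)) 0 :=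
    ⟨rfl, i, j, k, l, m, t, rfl⟩
  have h := RingQuot.mkAlgHom_rel F hrel
  simp only [map_add, map_sub, map_mul, map_zero,
    apply_ite (RingQuot.mkAlgHom F (ajtsRel F n))] at h
  rw [← sub_eq_zero]
  calc gen F n i j * gen F n k l * gen F n m t - gen F n m t * gen F n k l * gen F n i j
        - ((if j = k ∧ l = m then gen F n i t else 0)
          - (if t = k ∧ l = i then gen F n m j else 0))
      = gen F n i j * gen F n k l * gen F n m t - gen F n m t * gen F n k l * gen F n i j
        - (if j = k ∧ l = m then gen F n i t else 0)
        + (if t = k ∧ l = i then gen F n m j else 0) := by abel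
    _ = 0 := h

/-- The associative "diamond" identity. -/
lemma keyid {A : Type*} [Ring A] (a b c d : A) :
    (a * b * c - c * b * a) * d + c * (b * a * d - d * a * b)
      = (a * d * c - c * d * a) * b + a * (b * c * d - d * c * b) := by
  noncomm_ring

/-- In `𝔄`: (i) `e_{rt}e_{tm} = e_{r1}e_{1m}` for `m ≠ r`, `t ≠ 1`;
(ii) `e_{it}e_{li} = e_{1t}e_{l1}` for `t ≠ l`, `i ≠ 1`;
(iii) `e_{ij}e_{kl} = 0` for `i ≠ l`, `j ≠ k`. -/
theorem envelope_degree_two_relations (F : Type*) [Field F] [IsAlgClosed F] [CharZero F]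
    (n : ℕ) [NeZero n] (hn : 2 ≤ n) :
    (∀ r t m : Fin n, m ≠ r → t ≠ 0 →
      gen F n r t * gen F n t m = gen F n r 0 * gen F n 0 m) ∧
    (∀ i t l : Fin n, t ≠ l → i ≠ 0 →
      gen F n i t * gen F n l i = gen F n 0 t * gen F n l 0) ∧
    (∀ i j k l : Fin n, i ≠ l → j ≠ k → gen F n i j * gen F n k l = 0) := by
  refine ⟨?_, ?_, ?_⟩
  · -- (i): A=(r,t), B=(t,0), C=(0,0), D=(0,m)
    intro r t m hm ht
    have h1 : gen F n r t * gen F n t 0 * gen F n 0 0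
        - gen F n 0 0 * gen F n t 0 * gen F n r t = gen F n r 0 := by
      rw [eq3 F n r t t 0 0 0, if_pos ⟨rfl, rfl⟩, if_neg (fun h => ht h.1.symm)]; abel
    have h2 : gen F n t 0 * gen F n r t * gen F n 0 m
        - gen F n 0 m * gen F n r t * gen F n t 0 = 0 := by
      rw [eq3 F n t 0 r t 0 m, if_neg (fun h => ht h.2), if_neg (fun h => hm h.1)]; abel
    have h3 : gen F n r t * gen F n 0 m * gen F n 0 0
        - gen F n 0 0 * gen F n 0 m * gen F n r t = 0 := by
      rw [eq3 F n r t 0 m 0 0, if_neg (fun h => ht h.1), if_neg (fun h => hm h.2)]; abel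
    have h4 : gen F n t 0 * gen F n 0 0 * gen F n 0 m
        - gen F n 0 m * gen F n 0 0 * gen F n t 0 = gen F n t m := by
      rw [eq3 F n t 0 0 0 0 m, if_pos ⟨rfl, rfl⟩, if_neg (fun h => ht h.2.symm)]; abel
    have h := keyid (gen F n r t) (gen F n t 0) (gen F n 0 0) (gen F n 0 m)
    rw [h1, h2, h3, h4] at h
    -- h : gen r 0 * gen 0 m + gen 0 0 * 0 = 0 * gen t 0 + gen r t * gen t m
    rw [← sub_eq_zero]
    calc gen F n r t * gen F n t m - gen F n r 0 * gen F n 0 m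
        = (0 * gen F n t 0 + gen F n r t * gen F n t m)
          - (gen F n r 0 * gen F n 0 m + gen F n 0 0 * 0) := by noncomm_ring
      _ = 0 := by rw [← h]; exact sub_self _
  · -- (ii): A=(i,0), B=(0,0), C=(0,t), D=(l,i)
    intro i t l htl hi
    have h1 : gen F n i 0 * gen F n 0 0 * gen F n 0 t
        - gen F n 0 t * gen F n 0 0 * gen F n i 0 = gen F n i t := by
      rw [eq3 F n i 0 0 0 0 t, if_pos ⟨rfl, rfl⟩, if_neg (fun h => hi h.2.symm)]; abel
    have h2 : gen F n 0 0 * gen F n i 0 * gen F n l i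
        - gen F n l i * gen F n i 0 * gen F n 0 0 = - gen F n l 0 := by
      rw [eq3 F n 0 0 i 0 l i, if_neg (fun h => hi h.1.symm), if_pos ⟨rfl, rfl⟩]; abel
    have h3 : gen F n i 0 * gen F n l i * gen F n 0 t
        - gen F n 0 t * gen F n l i * gen F n i 0 = 0 := by
      rw [eq3 F n i 0 l i 0 t, if_neg (fun h => hi h.2), if_neg (fun h => htl h.1)]; abel
    have h4 : gen F n 0 0 * gen F n 0 t * gen F n l i
        - gen F n l i * gen F n 0 t * gen F n 0 0 = 0 := by
      rw [eq3 F n 0 0 0 t l i, if_neg (fun h => htl h.2), if_neg (fun h => hi h.1)]; abel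
    have h := keyid (gen F n i 0) (gen F n 0 0) (gen F n 0 t) (gen F n l i)
    rw [h1, h2, h3, h4] at h
    rw [mul_neg (gen F n 0 t) (gen F n l 0)] at h
    simp only [mul_zero, zero_mul, add_zero, zero_add] at h
    -- h : gen i t * gen l i + -(gen 0 t * gen l 0) = 0
    rw [← sub_eq_zero, sub_eq_add_neg]
    exact h
  · -- (iii): A=(i,j), B=(j,l), C=(l,j), D=(k,l)
    intro i j k l hil hjk
    have h1 : gen F n i j * gen F n j l * gen F n l j
        - gen F n l j * gen F n j l * gen F n i j = gen F n i j := by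
      rw [eq3 F n i j j l l j, if_pos ⟨rfl, rfl⟩, if_neg (fun h => hil h.2.symm)]; abel
    have h2 : gen F n j l * gen F n i j * gen F n k l
        - gen F n k l * gen F n i j * gen F n j l = 0 := by
      rw [eq3 F n j l i j k l, if_neg (fun h => hjk h.2), if_neg (fun h => hil h.1.symm)]; abel
    have h3 : gen F n i j * gen F n k l * gen F n l j
        - gen F n l j * gen F n k l * gen F n i j = 0 := by
      rw [eq3 F n i j k l l j, if_neg (fun h => hjk h.1), if_neg (fun h => hjk h.1)]; abel
    have h4 : gen F n j l * gen F n l j * gen F n k l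
        - gen F n k l * gen F n l j * gen F n j l = - gen F n k l := by
      rw [eq3 F n j l l j k l, if_neg (fun h => hjk h.2), if_pos ⟨rfl, rfl⟩]; abel
    have h := keyid (gen F n i j) (gen F n j l) (gen F n l j) (gen F n k l)
    rw [h1, h2, h3, h4] at h
    rw [mul_neg (gen F n i j) (gen F n k l)] at h
    simp only [mul_zero, zero_mul, add_zero, zero_add] at h
    -- h : gen i j * gen k l = -(gen i j * gen k l)
    have hsum : gen F n i j * gen F n k l + gen F n i j * gen F n k l = 0 := by
      nth_rewrite 1 [h]
      exact neg_add_cancel _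
    have h2' : ((2 : F)⁻¹ * 2) • (gen F n i j * gen F n k l) = 0 := by
      rw [mul_smul, two_smul, hsum, smul_zero]
    rwa [inv_mul_cancel₀ two_ne_zero, one_smul] at h2'


end
end

section
/- In the universal associative envelope 𝔄, for all r, i ∈ {2,…,n} the identity e_{ri}e_{ir} = e_{r1}e_{1r} − e_{11}² + e_{1i}e_{i1} holds. -/
noncomputable section

lemma gen_rel (F : Type*) [Field F] (n : ℕ) (i j k l m t : Fin n) :
    gen F n i j * gen F n k l * gen F n m t - gen F n m t * gen F n k l * gen F n i j
      - (if j = k ∧ l = m then gen F n i t else 0)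
      + (if t = k ∧ l = i then gen F n m j else 0) = 0 := by
  have hrel : ajtsRel F n
      (FreeAlgebra.ι F (i, j) * FreeAlgebra.ι F (k, l) * FreeAlgebra.ι F (m, t)
        - FreeAlgebra.ι F (m, t) * FreeAlgebra.ι F (k, l) * FreeAlgebra.ι F (i, j)
        - (if j = k ∧ l = m then FreeAlgebra.ι F (i, t) else 0)
        + (if t = k ∧ l = i then FreeAlgebra.ι F (m, j) else 0)) 0 :=
    ⟨rfl, i, j, k, l, m, t, rfl⟩
  have h := RingQuot.mkAlgHom_rel F hrel
  simpa [gen, apply_ite (RingQuot.mkAlgHom F (ajtsRel F n)), map_sub, map_add, map_mul] using h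

/-- In `𝔄`, for all `r, i ∈ {2,…,n}`:
`e_{ri}e_{ir} = e_{r1}e_{1r} - e_{11}² + e_{1i}e_{i1}`. -/
theorem envelope_G4_relation (F : Type*) [Field F] [IsAlgClosed F] [CharZero F]
    (n : ℕ) [NeZero n] (hn : 2 ≤ n) (r i : Fin n) (hr : r ≠ 0) (hi : i ≠ 0) :
    gen F n r i * gen F n i r =
      gen F n r 0 * gen F n 0 r - gen F n 0 0 ^ 2 + gen F n 0 i * gen F n i 0 := by
  have h1 := gen_rel F n r 0 0 0 0 i
  have h2 := gen_rel F n 0 0 r 0 i r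
  have h3 := gen_rel F n 0 0 0 i i r
  have h4 := gen_rel F n r 0 i r 0 i
  simp only [if_pos, if_neg, and_true, true_and, eq_self_iff_true, if_true,
    Ne.symm hr, Ne.symm hi, hr, hi, if_false, and_self, false_and, and_false,
    add_zero, sub_zero] at h1 h2 h3 h4
  have key : gen F n r i * gen F n i r -
      (gen F n r 0 * gen F n 0 r - gen F n 0 0 ^ 2 + gen F n 0 i * gen F n i 0) =
      -((gen F n r 0 * gen F n 0 0 * gen F n 0 i - gen F n 0 i * gen F n 0 0 * gen F n r 0
            - gen F n r i) * gen F n i r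
        + gen F n 0 i * (gen F n 0 0 * gen F n r 0 * gen F n i r
            - gen F n i r * gen F n r 0 * gen F n 0 0 + gen F n i 0)
        - gen F n r 0 * (gen F n 0 0 * gen F n 0 i * gen F n i r
            - gen F n i r * gen F n 0 i * gen F n 0 0 - gen F n 0 r)
        - (gen F n r 0 * gen F n i r * gen F n 0 i - gen F n 0 i * gen F n i r * gen F n r 0
            + gen F n 0 0) * gen F n 0 0) := by
    simp only [pow_two, mul_sub, sub_mul, mul_add, add_mul, mul_assoc]
    abel
  rw [h1, h2, h3, h4] at key
  simp only [zero_mul, mul_zero, sub_zero, add_zero, zero_add, neg_zero, zero_sub, neg_neg] at key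
  exact sub_eq_zero.mp key

end
end

section
/- In the universal associative envelope 𝔄, for all i,j,k,l ∈ {1,…,n} the product e_{ij}·e_{kl} is given as follows: if j ≠ k and i ≠ l then e_{ij}e_{kl} = 0; if j ≠ k and i = l then e_{ij}e_{kl} = e_{1j}e_{k1}; if j = k and i ≠ l then e_{ij}e_{kl} = e_{i1}e_{1l}; if j = k and i = l then: e_{ij}e_{ji} = e_{1j}e_{j1} when i = 1, e_{ij}e_{ji} = e_{i1}e_{1i} when i ≠ 1 and j = 1, and e_{ij}e_{ji} = e_{i1}e_{1i} + e_{1j}e_{j1} − e_{11}² when i ≠ 1 and j ≠ 1. -/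
noncomputable section

/-- The complete multiplication rule for `e_{ij}·e_{kl}` in `𝔄` (Proposition 4.2 (4.1)). -/
theorem envelope_product_eij_ekl (F : Type*) [Field F] [IsAlgClosed F] [CharZero F]
    (n : ℕ) [NeZero n] (hn : 2 ≤ n) (i j k l : Fin n) :
    (j ≠ k → i ≠ l → gen F n i j * gen F n k l = 0) ∧
    (j ≠ k → i = l → gen F n i j * gen F n k l = gen F n 0 j * gen F n k 0) ∧
    (j = k → i ≠ l → gen F n i j * gen F n k l = gen F n i 0 * gen F n 0 l) ∧
    (j = k → i = l → i = 0 →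
      gen F n i j * gen F n k l = gen F n 0 j * gen F n j 0) ∧
    (j = k → i = l → i ≠ 0 → j = 0 →
      gen F n i j * gen F n k l = gen F n i 0 * gen F n 0 i) ∧
    (j = k → i = l → i ≠ 0 → j ≠ 0 →
      gen F n i j * gen F n k l =
        gen F n i 0 * gen F n 0 i + gen F n 0 j * gen F n j 0 - gen F n 0 0 ^ 2) := by
  refine ⟨?_, ?_, ?_, ?_, ?_, ?_⟩
  · -- case 1 : j ≠ k, i ≠ l
    intro hjk hil
    have h1 := gen_rel F n i k k i i j
    have h2 := gen_rel F n k i i k k l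
    have h3 := gen_rel F n k i i j k l
    have h4 := gen_rel F n i k k l i j
    simp only [hjk, Ne.symm hil, and_true, true_and, and_false, false_and,
      if_true, if_false, ite_true, ite_false, sub_zero, add_zero] at h1 h2 h3 h4
    have key : gen F n i j * gen F n k l + gen F n i j * gen F n k l = 0 := by
      linear_combination (norm := (noncomm_ring; noncomm_ring))
        -(h1 * gen F n k l) - gen F n i j * h2 + gen F n i k * h3 + h4 * gen F n k i
    have h2s : (2 : F) • (gen F n i j * gen F n k l) = 0 := by
      rw [two_smul]; exact key
    have := congrArg (fun z => (2 : F)⁻¹ • z) h2s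
    simpa [smul_smul, inv_mul_cancel₀ (two_ne_zero (α := F))] using this
  · -- case 2 : j ≠ k, i = l
    intro hjk hil
    subst hil
    by_cases hi0 : i = 0
    · subst hi0; rfl
    · have h1 := gen_rel F n 0 0 0 i i j
      have h2 := gen_rel F n 0 i 0 0 k 0
      have h3 := gen_rel F n 0 i i j k 0
      have h4 := gen_rel F n 0 0 k 0 i j
      simp only [hjk, hi0, Ne.symm hi0, and_true, true_and, and_false, false_and,
        if_true, if_false, ite_true, ite_false, sub_zero, add_zero] at h1 h2 h3 h4
      linear_combination (norm := (noncomm_ring; noncomm_ring))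
        h1 * gen F n k 0 + gen F n i j * h2 - gen F n 0 0 * h3 - h4 * gen F n 0 i
  · -- case 3 : j = k, i ≠ l
    intro hjk hil
    subst hjk
    by_cases hj0 : j = 0
    · subst hj0; rfl
    · have h1 := gen_rel F n i j j 0 0 0
      have h2 := gen_rel F n j 0 i j 0 l
      have h3 := gen_rel F n j 0 0 0 0 l
      have h4 := gen_rel F n i j 0 l 0 0
      simp only [hil, Ne.symm hil, hj0, Ne.symm hj0, and_true, true_and, and_false, false_and,
        if_true, if_false, ite_true, ite_false, sub_zero, add_zero] at h1 h2 h3 h4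
      linear_combination (norm := (noncomm_ring; noncomm_ring))
        h1 * gen F n 0 l + gen F n 0 0 * h2 - gen F n i j * h3 - h4 * gen F n j 0
  · -- case 4 : j = k, i = l, i = 0
    intro hjk hil hi0
    subst hjk; subst hil; subst hi0; rfl
  · -- case 5 : j = k, i = l, i ≠ 0, j = 0
    intro hjk hil _ hj0
    subst hjk; subst hil; subst hj0; rfl
  · -- case 6 : j = k, i = l, i ≠ 0, j ≠ 0
    intro hjk hil hi0 hj0
    subst hjk; subst hil
    have h1 := gen_rel F n i j j 0 0 0
    have h2 := gen_rel F n j 0 i j 0 i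
    have h3 := gen_rel F n j 0 0 0 0 i
    have h4 := gen_rel F n i j 0 i 0 0
    simp only [hi0, Ne.symm hi0, hj0, Ne.symm hj0, and_true, true_and, and_false, false_and,
      if_true, if_false, ite_true, ite_false, sub_zero, add_zero] at h1 h2 h3 h4
    linear_combination (norm := (noncomm_ring; noncomm_ring))
      h1 * gen F n 0 i + gen F n 0 0 * h2 - gen F n i j * h3 - h4 * gen F n j 0

end
end
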